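/- Let α ≥ 1 be an integer and let y ∈ L satisfy y^{q^α} = x; set [−α] := y − x. Then for every n ∈ ℕ one has ⟨[−α]⟩_n^{q^{α−1}} · D_{α−1}^{q^n} = D_{n+α−1}. (Thus the Pochhammer-type symbol ⟨[−α]⟩_n equals Thakur's Pochhammer symbol (α)_n = D_{n+α−1}^{q^{−(α−1)}} divided by the normalization factor (α)_0^{q^n} = D_{α−1}^{q^{n−α+1}}, so the hypergeometric function built from the symbols ⟨·⟩ coincides with Thakur's hypergeometric function up to a change of variable.) -/
import Mathlib


/-- The Carlitz bracket `[i] = x^{q^i} - x`. -/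
def br (q : ℕ) {L : Type*} [Field L] (x : L) (i : ℕ) : L := x ^ q ^ i - x

/-- The Pochhammer-type symbol `⟨a⟩_m = ([0]-a)^{q^m} ([1]-a)^{q^{m-1}} ⋯ ([m-1]-a)^q`. -/
def poch (q : ℕ) {L : Type*} [Field L] (x a : L) (m : ℕ) : L :=
  ∏ k ∈ Finset.range m, (br q x k - a) ^ q ^ (m - k)

/-- The Carlitz factorial `D_0 = 1`, `D_m = [m]·D_{m-1}^q`. -/
def DD (q : ℕ) {L : Type*} [Field L] (x : L) : ℕ → L
  | 0 => 1
  | m + 1 => br q x (m + 1) * (DD q x m) ^ q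

lemma poch_succ (q : ℕ) {L : Type*} [Field L] (x a : L) (m : ℕ) :
    poch q x a (m + 1) = (br q x m - a) ^ q * (poch q x a m) ^ q := by
  unfold poch
  rw [Finset.prod_range_succ, Nat.add_sub_cancel_left, pow_one, mul_comm,
    ← Finset.prod_pow]
  congr 1
  refine Finset.prod_congr rfl fun k hk => ?_
  have hk' := Finset.mem_range.mp hk
  rw [show m + 1 - k = (m - k) + 1 by omega, pow_succ, pow_mul]

/-- $⟨[-α]⟩_n^{q^{α-1}} · D_{α-1}^{q^n} = D_{n+α-1}$, identifying the
Pochhammer-type symbols with Thakur's symbols $(α)_n$ up to normalization. -/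
theorem stmt10 {p v q : ℕ} (hp : p.Prime) (hv : 0 < v) (hq : q = p ^ v)
    {L : Type*} [Field L] [CharP L p] (x : L)
    (α : ℕ) (hα : 1 ≤ α) (y : L) (hy : y ^ q ^ α = x) (n : ℕ) :
    (poch q x (y - x) n) ^ q ^ (α - 1) * (DD q x (α - 1)) ^ q ^ n
      = DD q x (n + α - 1) := by
  induction n with
  | zero => simp [poch]
  | succ n ih =>
    have hqa : q * q ^ (α - 1) = q ^ α := by
      rw [← pow_succ']; congr 1; omega
    have hbr : (br q x n - (y - x)) ^ q ^ α = br q x (n + α) := by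
      haveI := Fact.mk hp
      have hfrob : ∀ a b : L, (a - b) ^ q ^ α = a ^ q ^ α - b ^ q ^ α := by
        intro a b
        rw [hq, ← pow_mul, sub_pow_char_pow, pow_mul]
      have : br q x n - (y - x) = x ^ q ^ n - y := by unfold br; ring
      rw [this, hfrob, hy, ← pow_mul, ← pow_add]
      rfl
    rw [poch_succ, mul_pow, ← pow_mul, ← pow_mul, hqa, hbr, mul_assoc]
    have h2 : poch q x (y - x) n ^ q ^ α * DD q x (α - 1) ^ q ^ (n + 1)
        = DD q x (n + α - 1) ^ q := by
      rw [← ih, mul_pow, ← pow_mul, ← pow_mul, ← pow_succ, ← pow_succ,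
        Nat.sub_add_cancel hα]
    rw [h2, show n + 1 + α - 1 = (n + α - 1) + 1 by omega, DD]
    congr 2
    omega
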